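/- arXiv:2201.10929 — 7 statements merged into one kernel-verified Lean document; each statement's English description precedes it below -/
import Mathlib

section
/- Under the Markov chain Y → X → X̂, the conditional mutual information I(X;Y|X̂) equals the expected task-relevant distortion, i.e. I(X;Y|X̂) = Σ_{x,x̂} pXX̂(x,x̂) · Σ_y p(y|x) · log( p(y|x) / p(y|x̂) ). -/
/-- Under the Markov chain Y → X → X̂, the conditional mutual information
`I(X;Y|X̂)` equals the expected task-relevant distortion
`Σ_{x,x̂} pXX̂(x,x̂) · Σ_y p(y|x) · log(p(y|x)/p(y|x̂))`. -/
theorem cond_mutual_info_eq_expected_task_distortion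
    {𝒳 𝒳h 𝒴 : Type*} [Fintype 𝒳] [Fintype 𝒳h] [Fintype 𝒴]
    [Nonempty 𝒳] [Nonempty 𝒳h] [Nonempty 𝒴]
    (p : 𝒳 → 𝒳h → 𝒴 → ℝ)
    (hpos : ∀ x xh y, 0 < p x xh y)
    (hsum : ∑ x, ∑ xh, ∑ y, p x xh y = 1)
    (pX : 𝒳 → ℝ) (hpX : ∀ x, pX x = ∑ xh, ∑ y, p x xh y)
    (pXh : 𝒳h → ℝ) (hpXh : ∀ xh, pXh xh = ∑ x, ∑ y, p x xh y)
    (pXY : 𝒳 → 𝒴 → ℝ) (hpXY : ∀ x y, pXY x y = ∑ xh, p x xh y)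
    (pXXh : 𝒳 → 𝒳h → ℝ) (hpXXh : ∀ x xh, pXXh x xh = ∑ y, p x xh y)
    (pXhY : 𝒳h → 𝒴 → ℝ) (hpXhY : ∀ xh y, pXhY xh y = ∑ x, p x xh y)
    (hMarkov : ∀ x xh y, p x xh y * pX x = pXY x y * pXXh x xh) :
    (∑ x, ∑ xh, ∑ y, p x xh y *
        Real.log (p x xh y * pXh xh / (pXXh x xh * pXhY xh y)))
      = ∑ x, ∑ xh, pXXh x xh *
          ∑ y, (pXY x y / pX x) *
            Real.log ((pXY x y / pX x) / (pXhY xh y / pXh xh)) := by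
  have hpX' : ∀ x, 0 < pX x := fun x => by
    rw [hpX]
    exact Finset.sum_pos (fun xh _ => Finset.sum_pos (fun y _ => hpos x xh y)
      Finset.univ_nonempty) Finset.univ_nonempty
  have hpXh' : ∀ xh, 0 < pXh xh := fun xh => by
    rw [hpXh]
    exact Finset.sum_pos (fun x _ => Finset.sum_pos (fun y _ => hpos x xh y)
      Finset.univ_nonempty) Finset.univ_nonempty
  have hpXY' : ∀ x y, 0 < pXY x y := fun x y => by
    rw [hpXY]; exact Finset.sum_pos (fun xh _ => hpos x xh y) Finset.univ_nonempty
  have hpXXh' : ∀ x xh, 0 < pXXh x xh := fun x xh => by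
    rw [hpXXh]; exact Finset.sum_pos (fun y _ => hpos x xh y) Finset.univ_nonempty
  have hpXhY' : ∀ xh y, 0 < pXhY xh y := fun xh y => by
    rw [hpXhY]; exact Finset.sum_pos (fun x _ => hpos x xh y) Finset.univ_nonempty
  refine Finset.sum_congr rfl fun x _ => Finset.sum_congr rfl fun xh _ => ?_
  rw [Finset.mul_sum]
  refine Finset.sum_congr rfl fun y _ => ?_
  have hp : p x xh y = pXY x y * pXXh x xh / pX x := by
    rw [eq_div_iff (hpX' x).ne']
    exact hMarkov x xh y
  have harg : p x xh y * pXh xh / (pXXh x xh * pXhY xh y)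
      = (pXY x y / pX x) / (pXhY xh y / pXh xh) := by
    rw [hp]
    field_simp [(hpX' x).ne', (hpXh' xh).ne', (hpXXh' x xh).ne', (hpXhY' xh y).ne']
  rw [harg, hp]
  field_simp
end

section
/- (Lemma 1) Under the Markov chain Y → X → X̂, the task-relevant distortion admits two equivalent expressions: I(X;Y) − I(X̂;Y) = Σ_{x,x̂,y} p(x,x̂,y) · log( p(y|x) / p(y|x̂) ), i.e. the reduction of mutual information with the label Y caused by passing from X to X̂ equals the expectation over p(x,x̂) of the Kullback–Leibler divergence between p(y|x) and p(y|x̂). -/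
/-- (Lemma 1) Under the Markov chain Y → X → X̂, the task-relevant distortion
admits two equivalent expressions:
`I(X;Y) − I(X̂;Y) = Σ_{x,x̂,y} p(x,x̂,y) · log(p(y|x)/p(y|x̂))`. -/
theorem task_relevant_distortion_eq_mutual_info_reduction
    {𝒳 𝒳h 𝒴 : Type*} [Fintype 𝒳] [Fintype 𝒳h] [Fintype 𝒴]
    [Nonempty 𝒳] [Nonempty 𝒳h] [Nonempty 𝒴]
    (p : 𝒳 → 𝒳h → 𝒴 → ℝ)
    (hpos : ∀ x xh y, 0 < p x xh y)
    (hsum : ∑ x, ∑ xh, ∑ y, p x xh y = 1)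
    (pX : 𝒳 → ℝ) (hpX : ∀ x, pX x = ∑ xh, ∑ y, p x xh y)
    (pXh : 𝒳h → ℝ) (hpXh : ∀ xh, pXh xh = ∑ x, ∑ y, p x xh y)
    (pY : 𝒴 → ℝ) (hpY : ∀ y, pY y = ∑ x, ∑ xh, p x xh y)
    (pXY : 𝒳 → 𝒴 → ℝ) (hpXY : ∀ x y, pXY x y = ∑ xh, p x xh y)
    (pXXh : 𝒳 → 𝒳h → ℝ) (hpXXh : ∀ x xh, pXXh x xh = ∑ y, p x xh y)
    (pXhY : 𝒳h → 𝒴 → ℝ) (hpXhY : ∀ xh y, pXhY xh y = ∑ x, p x xh y)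
    (hMarkov : ∀ x xh y, p x xh y * pX x = pXY x y * pXXh x xh) :
    (∑ x, ∑ y, pXY x y * Real.log (pXY x y / (pX x * pY y)))
      - (∑ xh, ∑ y, pXhY xh y * Real.log (pXhY xh y / (pXh xh * pY y)))
      = ∑ x, ∑ xh, ∑ y, p x xh y *
          Real.log ((pXY x y / pX x) / (pXhY xh y / pXh xh)) := by
  have hX : ∀ x, 0 < pX x := fun x => by
    rw [hpX]
    exact Finset.sum_pos (fun xh _ => Finset.sum_pos (fun y _ => hpos x xh y)
      Finset.univ_nonempty) Finset.univ_nonempty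
  have hXh : ∀ xh, 0 < pXh xh := fun xh => by
    rw [hpXh]
    exact Finset.sum_pos (fun x _ => Finset.sum_pos (fun y _ => hpos x xh y)
      Finset.univ_nonempty) Finset.univ_nonempty
  have hY : ∀ y, 0 < pY y := fun y => by
    rw [hpY]
    exact Finset.sum_pos (fun x _ => Finset.sum_pos (fun xh _ => hpos x xh y)
      Finset.univ_nonempty) Finset.univ_nonempty
  have hXY : ∀ x y, 0 < pXY x y := fun x y => by
    rw [hpXY]; exact Finset.sum_pos (fun xh _ => hpos x xh y) Finset.univ_nonempty
  have hXhY : ∀ xh y, 0 < pXhY xh y := fun xh y => by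
    rw [hpXhY]; exact Finset.sum_pos (fun x _ => hpos x xh y) Finset.univ_nonempty
  have key : ∀ x xh y,
      p x xh y * Real.log ((pXY x y / pX x) / (pXhY xh y / pXh xh))
        = p x xh y * Real.log (pXY x y / (pX x * pY y))
          - p x xh y * Real.log (pXhY xh y / (pXh xh * pY y)) := by
    intro x xh y
    rw [Real.log_div (by have := hXY x y; have := hX x; positivity) (by
        have := hXhY xh y; have := hXh xh; positivity),
      Real.log_div (hXY x y).ne' (hX x).ne',
      Real.log_div (hXhY xh y).ne' (hXh xh).ne',
      Real.log_div (hXY x y).ne' (by have := hX x; have := hY y; positivity),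
      Real.log_div (hXhY xh y).ne' (by have := hXh xh; have := hY y; positivity),
      Real.log_mul (hX x).ne' (hY y).ne',
      Real.log_mul (hXh xh).ne' (hY y).ne']
    ring
  simp only [key, Finset.sum_sub_distrib]
  congr 1
  · rw [Finset.sum_congr rfl (fun x _ => ?_)]
    rw [Finset.sum_comm]
    refine Finset.sum_congr rfl (fun y _ => ?_)
    rw [← Finset.sum_mul, ← hpXY]
  · conv_rhs => rw [Finset.sum_comm]
    refine Finset.sum_congr rfl (fun xh _ => ?_)
    rw [Finset.sum_comm]
    refine Finset.sum_congr rfl (fun y _ => ?_)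
    rw [← Finset.sum_mul, ← hpXhY]
end

section
/- The partial derivative of the rate functional with respect to a single kernel entry: fix a matrix q : 𝒳 × 𝒳̂ → ℝ with all entries positive and a coordinate (x₀, x̂₀). Then the real function t ↦ F(q[(x₀,x̂₀) ↦ t]), obtained from F by replacing the entry q(x₀,x̂₀) with t, has derivative at the point t = q(x₀,x̂₀) equal to pX(x₀) · log( q(x₀,x̂₀) / pq(x̂₀) ). -/
/-! Each column of `F` has the form `Σ_x w_x a_x log (a_x / S)` with `S = Σ_x w_x a_x`. Along any
direction `a'` its derivative is `Σ_x w_x a'_x log (a_x / S)` plus `Σ_x w_x a'_x - S · S' / S`, and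
the latter vanishes because `S' = Σ_x w_x a'_x`: the dependence of the normaliser drops out. In the
direction of the single entry `(x₀, x̂₀)` only `pX x₀ · log (q (x₀, x̂₀) / pq x̂₀)` survives. -/

open Real Finset

theorem HasDerivAt.mul_log_div {f g : ℝ → ℝ} {f' g' t : ℝ} (hf : HasDerivAt f f' t)
    (hg : HasDerivAt g g' t) (hf0 : f t ≠ 0) (hg0 : g t ≠ 0) :
    HasDerivAt (fun s => f s * Real.log (f s / g s))
      (f' * Real.log (f t / g t) + f' - f t * g' / g t) t := by
  refine (hf.mul ((hf.div hg hg0).log (div_ne_zero hf0 hg0))).congr_deriv ?_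
  simp only [Pi.div_apply]
  field_simp
  ring

theorem hasDerivAt_sum_mul_log_div_sum {ι : Type*} [Fintype ι] (w : ι → ℝ) {a : ι → ℝ → ℝ}
    {a' : ι → ℝ} {t : ℝ} (ha : ∀ i, HasDerivAt (a i) (a' i) t) (ha0 : ∀ i, a i t ≠ 0)
    (hS : ∑ j, w j * a j t ≠ 0) :
    HasDerivAt (fun s => ∑ i, w i * a i s * log (a i s / ∑ j, w j * a j s))
      (∑ i, w i * a' i * log (a i t / ∑ j, w j * a j t)) t := by
  have hSderiv : HasDerivAt (fun s => ∑ j, w j * a j s) (∑ j, w j * a' j) t :=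
    HasDerivAt.fun_sum fun j _ => (ha j).const_mul (w j)
  have hterm := HasDerivAt.fun_sum fun i (_ : i ∈ univ) =>
    ((ha i).mul_log_div hSderiv (ha0 i) hS).const_mul (w i)
  simp only [mul_assoc]
  refine hterm.congr_deriv ?_
  have hcancel : ∑ i, w i * (a' i - a i t * (∑ j, w j * a' j) / ∑ j, w j * a j t) = 0 := by
    simp only [mul_sub, sum_sub_distrib, ← mul_div_assoc, ← mul_assoc, ← sum_div, ← sum_mul]
    field_simp
    ring
  rw [← sub_eq_zero, ← sum_sub_distrib, ← hcancel]
  exact sum_congr rfl fun i _ => by ring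

theorem rate_functional_partial_derivative_general
    {𝒳 𝒳h : Type*} [Fintype 𝒳] [Fintype 𝒳h]
    [DecidableEq 𝒳] [DecidableEq 𝒳h]
    (pX : 𝒳 → ℝ) (hpXpos : ∀ x, 0 < pX x)
    (q : 𝒳 × 𝒳h → ℝ) (hqpos : ∀ x xh, 0 < q (x, xh))
    (x₀ : 𝒳) (xh₀ : 𝒳h) :
    HasDerivAt
      (fun t : ℝ =>
        ∑ x, ∑ xh, pX x * Function.update q (x₀, xh₀) t (x, xh) *
          Real.log (Function.update q (x₀, xh₀) t (x, xh) /
            ∑ x', pX x' * Function.update q (x₀, xh₀) t (x', xh)))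
      (pX x₀ * Real.log (q (x₀, xh₀) / ∑ x', pX x' * q (x', xh₀)))
      (q (x₀, xh₀)) := by
  have hpq : ∀ xh, ∑ x', pX x' * q (x', xh) ≠ 0 := fun xh =>
    (sum_pos (fun x _ => mul_pos (hpXpos x) (hqpos x xh)) ⟨x₀, mem_univ _⟩).ne'
  have hentry := hasDerivAt_pi.mp (hasDerivAt_update q (x₀, xh₀) (q (x₀, xh₀)))
  have hcolumn := HasDerivAt.fun_sum fun xh (_ : xh ∈ univ) =>
    hasDerivAt_sum_mul_log_div_sum pX (fun x => hentry (x, xh))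
      (by simpa using fun x => (hqpos x xh).ne') (by simpa using hpq xh)
  rw [funext fun t => sum_comm]
  refine hcolumn.congr_deriv ?_
  rw [sum_comm, ← Fintype.sum_prod_type', Fintype.sum_eq_single (x₀, xh₀)]
  · simp
  · intro p hp
    simp [Pi.single_eq_of_ne hp]

/-- Partial derivative of the rate functional
`F(q) = Σ_{x,x̂} pX(x)·q(x,x̂)·log(q(x,x̂)/pq(x̂))`, where `pq(x̂) = Σ_x pX(x)·q(x,x̂)`,
with respect to the single kernel entry `q(x₀,x̂₀)`:
the function `t ↦ F(q[(x₀,x̂₀) ↦ t])` has derivative `pX(x₀)·log(q(x₀,x̂₀)/pq(x̂₀))`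
at the point `t = q(x₀,x̂₀)`. -/
theorem rate_functional_partial_derivative
    {𝒳 𝒳h : Type*} [Fintype 𝒳] [Fintype 𝒳h] [Nonempty 𝒳] [Nonempty 𝒳h]
    [DecidableEq 𝒳] [DecidableEq 𝒳h]
    (pX : 𝒳 → ℝ) (hpXpos : ∀ x, 0 < pX x) (hpXsum : ∑ x, pX x = 1)
    (q : 𝒳 × 𝒳h → ℝ) (hqpos : ∀ x xh, 0 < q (x, xh))
    (x₀ : 𝒳) (xh₀ : 𝒳h) :
    HasDerivAt
      (fun t : ℝ =>
        ∑ x, ∑ xh, pX x * Function.update q (x₀, xh₀) t (x, xh) *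
          Real.log (Function.update q (x₀, xh₀) t (x, xh) /
            ∑ x', pX x' * Function.update q (x₀, xh₀) t (x', xh)))
      (pX x₀ * Real.log (q (x₀, xh₀) / ∑ x', pX x' * q (x', xh₀)))
      (q (x₀, xh₀)) :=
  rate_functional_partial_derivative_general pX hpXpos q hqpos x₀ xh₀
end

section
/- Derivative of the full Lagrangian of the extended rate-distortion problem: fix a matrix q : 𝒳 × 𝒳̂ → ℝ with all entries positive and a coordinate (x₀, x̂₀). Then the real function t ↦ L(q[(x₀,x̂₀) ↦ t]) has derivative at the point t = q(x₀,x̂₀) equal to λ · pX(x₀) · [ log( q(x₀,x̂₀) / pq(x̂₀) ) + λ⁻¹ · d_R(x₀,x̂₀) ] − β · pX(x₀) · Σ_y pYX(y|x₀) · log( pq(x̂₀|y) / pq(x̂₀) ) + r(x₀). -/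
/-!
Both `F` and `G` are, for each `x̂`, of the form `Σ_i w_i s_i log (s_i / Σ_j w_j s_j)` with every
`s_i` affine in the entry `q(x₀,x̂₀)`: for `F` take `i = x`, `w = pX`, `s = q(·,x̂)`; for `G` take
`i = y`, `w = pY`, `s = pq(x̂|·)`, whose mixture `Σ_y pY(y) pq(x̂|y)` is `pq(x̂)` because
`Σ_y pYX(y|x) = 1`. Differentiating the mixture in the denominator contributes
`v' - v · v' / v = 0`, so only the numerators `s_i` are differentiated. The distortion and
multiplier terms are linear in `q`.
-/

open Finset Real

theorem hasDerivAt_mul_log_div {f g : ℝ → ℝ} {f' g' t : ℝ}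
    (hf : HasDerivAt f f' t) (hg : HasDerivAt g g' t) (hf0 : f t ≠ 0) (hg0 : g t ≠ 0) :
    HasDerivAt (fun s => f s * log (f s / g s))
      (f' * log (f t / g t) + f' - f t * g' / g t) t := by
  have hlog := (hf.fun_div hg hg0).log (div_ne_zero hf0 hg0)
  refine (hf.fun_mul hlog).congr_deriv ?_
  field_simp
  ring

theorem hasDerivAt_sum_mul_mul_log_div_sum {ι : Type*} (s : Finset ι) (w : ι → ℝ)
    {f : ι → ℝ → ℝ} {f' : ι → ℝ} {t : ℝ}
    (hf : ∀ i ∈ s, HasDerivAt (f i) (f' i) t) (hf0 : ∀ i ∈ s, f i t ≠ 0)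
    (hsum0 : ∑ i ∈ s, w i * f i t ≠ 0) :
    HasDerivAt (fun u => ∑ i ∈ s, w i * f i u * log (f i u / ∑ j ∈ s, w j * f j u))
      (∑ i ∈ s, w i * f' i * log (f i t / ∑ j ∈ s, w j * f j t)) t := by
  set V := ∑ j ∈ s, w j * f j t
  set V' := ∑ j ∈ s, w j * f' j
  have hmix : HasDerivAt (fun u => ∑ j ∈ s, w j * f j u) V' t :=
    HasDerivAt.fun_sum fun j hj => (hf j hj).const_mul (w j)
  have hterm := HasDerivAt.fun_sum fun i hi =>
    ((hasDerivAt_mul_log_div (hf i hi) hmix (hf0 i hi) hsum0).const_mul (w i))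
  simp only [← mul_assoc] at hterm
  refine hterm.congr_deriv ?_
  have hsplit : ∀ i, w i * (f' i * log (f i t / V) + f' i - f i t * V' / V)
      = w i * f' i * log (f i t / V) + (w i * f' i - w i * f i t * (V' / V)) := fun i => by
    ring
  rw [sum_congr rfl fun i _ => hsplit i, sum_add_distrib, sum_sub_distrib, ← sum_mul,
    mul_div_cancel₀ _ hsum0, sub_self, add_zero]

theorem hasDerivAt_update_apply {ι : Type*} [DecidableEq ι] (f : ι → ℝ) (a p : ι) (t : ℝ) :
    HasDerivAt (fun s => Function.update f a s p) (if p = a then 1 else 0) t := by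
  by_cases h : p = a
  · subst h
    simpa using hasDerivAt_id' t
  · simpa [h] using hasDerivAt_const t (f p)

section RateDistortion

variable {𝒳 𝒳h 𝒴 : Type*} [Fintype 𝒳]

noncomputable def outputMarginal (pX : 𝒳 → ℝ) (pYX : 𝒳 → 𝒴 → ℝ) (y : 𝒴) : ℝ :=
  ∑ x, pX x * pYX x y

noncomputable def posterior (pX : 𝒳 → ℝ) (pYX : 𝒳 → 𝒴 → ℝ) (x : 𝒳) (y : 𝒴) : ℝ :=
  pX x * pYX x y / outputMarginal pX pYX y

-- `reproMarginal pX q x̂` is `pq(x̂)` and `reproCond pX pYX q x̂ y` is `pq(x̂|y)`.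
noncomputable def reproMarginal (pX : 𝒳 → ℝ) (q : 𝒳 × 𝒳h → ℝ) (xh : 𝒳h) : ℝ :=
  ∑ x, pX x * q (x, xh)

noncomputable def reproCond (pX : 𝒳 → ℝ) (pYX : 𝒳 → 𝒴 → ℝ) (q : 𝒳 × 𝒳h → ℝ) (xh : 𝒳h)
    (y : 𝒴) : ℝ :=
  ∑ x, q (x, xh) * posterior pX pYX x y

noncomputable def rateFunctional [Fintype 𝒳h] (pX : 𝒳 → ℝ) (q : 𝒳 × 𝒳h → ℝ) : ℝ :=
  ∑ x, ∑ xh, pX x * q (x, xh) * log (q (x, xh) / reproMarginal pX q xh)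

noncomputable def relevanceFunctional [Fintype 𝒳h] [Fintype 𝒴] (pX : 𝒳 → ℝ) (pYX : 𝒳 → 𝒴 → ℝ)
    (q : 𝒳 × 𝒳h → ℝ) : ℝ :=
  ∑ xh, ∑ y, outputMarginal pX pYX y * reproCond pX pYX q xh y *
    log (reproCond pX pYX q xh y / reproMarginal pX q xh)

variable {pX : 𝒳 → ℝ} {pYX : 𝒳 → 𝒴 → ℝ}

theorem outputMarginal_pos [Nonempty 𝒳] (hpX : ∀ x, 0 < pX x) (hpYX : ∀ x y, 0 < pYX x y)
    (y : 𝒴) : 0 < outputMarginal pX pYX y :=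
  sum_pos (fun x _ => mul_pos (hpX x) (hpYX x y)) univ_nonempty

theorem reproMarginal_pos [Nonempty 𝒳] {q : 𝒳 × 𝒳h → ℝ} (hpX : ∀ x, 0 < pX x)
    (hq : ∀ x xh, 0 < q (x, xh)) (xh : 𝒳h) : 0 < reproMarginal pX q xh :=
  sum_pos (fun x _ => mul_pos (hpX x) (hq x xh)) univ_nonempty

theorem reproCond_pos [Nonempty 𝒳] {q : 𝒳 × 𝒳h → ℝ} (hpX : ∀ x, 0 < pX x)
    (hpYX : ∀ x y, 0 < pYX x y) (hq : ∀ x xh, 0 < q (x, xh)) (xh : 𝒳h) (y : 𝒴) :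
    0 < reproCond pX pYX q xh y :=
  sum_pos (fun x _ => mul_pos (hq x xh)
    (div_pos (mul_pos (hpX x) (hpYX x y)) (outputMarginal_pos hpX hpYX y))) univ_nonempty

theorem outputMarginal_mul_posterior {x : 𝒳} {y : 𝒴} (hpY : outputMarginal pX pYX y ≠ 0) :
    outputMarginal pX pYX y * posterior pX pYX x y = pX x * pYX x y :=
  mul_div_cancel₀ _ hpY

theorem sum_outputMarginal_mul_reproCond [Fintype 𝒴] (hpY : ∀ y, outputMarginal pX pYX y ≠ 0)
    (hpYX : ∀ x, ∑ y, pYX x y = 1) (q : 𝒳 × 𝒳h → ℝ) (xh : 𝒳h) :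
    ∑ y, outputMarginal pX pYX y * reproCond pX pYX q xh y = reproMarginal pX q xh := by
  simp only [reproCond, mul_sum, mul_left_comm _ (q _), outputMarginal_mul_posterior (hpY _)]
  rw [sum_comm]
  refine sum_congr rfl fun x _ => ?_
  rw [← mul_sum, ← mul_sum, hpYX, mul_one, mul_comm]

variable [DecidableEq 𝒳] [DecidableEq 𝒳h]

theorem hasDerivAt_reproCond_update (q : 𝒳 × 𝒳h → ℝ) (a : 𝒳 × 𝒳h) (xh : 𝒳h) (y : 𝒴)
    (t : ℝ) :
    HasDerivAt (fun s => reproCond pX pYX (Function.update q a s) xh y)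
      (if xh = a.2 then posterior pX pYX a.1 y else 0) t := by
  refine (HasDerivAt.fun_sum fun x _ =>
    (hasDerivAt_update_apply q a (x, xh) t).mul_const (posterior pX pYX x y)).congr_deriv ?_
  by_cases hxh : xh = a.2 <;> simp [hxh, Prod.ext_iff]

theorem hasDerivAt_rateFunctional_update [Fintype 𝒳h] [Nonempty 𝒳] {q : 𝒳 × 𝒳h → ℝ}
    (hpX : ∀ x, 0 < pX x) (hq : ∀ x xh, 0 < q (x, xh)) (a : 𝒳 × 𝒳h) :
    HasDerivAt (fun t => rateFunctional pX (Function.update q a t))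
      (pX a.1 * log (q a / reproMarginal pX q a.2)) (q a) := by
  have hcol : ∀ xh, HasDerivAt
      (fun t => ∑ x, pX x * Function.update q a t (x, xh) *
        log (Function.update q a t (x, xh) / reproMarginal pX (Function.update q a t) xh))
      (∑ x, pX x * (if (x, xh) = a then 1 else 0) * log (q (x, xh) / reproMarginal pX q xh))
      (q a) := fun xh => by
    have h := hasDerivAt_sum_mul_mul_log_div_sum univ pX
      (fun x _ => hasDerivAt_update_apply q a (x, xh) (q a))
      (fun x _ => by simpa using (hq x xh).ne')
      (by simpa [reproMarginal] using (reproMarginal_pos hpX hq xh).ne')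
    simpa only [Function.update_eq_self, reproMarginal] using h
  have hswap : (fun t => rateFunctional pX (Function.update q a t)) = fun t => ∑ xh, ∑ x,
      pX x * Function.update q a t (x, xh) *
        log (Function.update q a t (x, xh) / reproMarginal pX (Function.update q a t) xh) :=
    funext fun t => sum_comm
  rw [hswap]
  refine (HasDerivAt.fun_sum fun xh _ => hcol xh).congr_deriv ?_
  simp [Prod.ext_iff, ite_and]

theorem hasDerivAt_relevanceFunctional_update [Fintype 𝒳h] [Fintype 𝒴] [Nonempty 𝒳]
    {q : 𝒳 × 𝒳h → ℝ} (hpX : ∀ x, 0 < pX x) (hpYX : ∀ x y, 0 < pYX x y)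
    (hpYXsum : ∀ x, ∑ y, pYX x y = 1) (hq : ∀ x xh, 0 < q (x, xh)) (a : 𝒳 × 𝒳h) :
    HasDerivAt (fun t => relevanceFunctional pX pYX (Function.update q a t))
      (pX a.1 * ∑ y, pYX a.1 y * log (reproCond pX pYX q a.2 y / reproMarginal pX q a.2))
      (q a) := by
  have hpY : ∀ y, outputMarginal pX pYX y ≠ 0 := fun y => (outputMarginal_pos hpX hpYX y).ne'
  have hmix := sum_outputMarginal_mul_reproCond (𝒳h := 𝒳h) hpY hpYXsum
  have hcol : ∀ xh, HasDerivAt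
      (fun t => ∑ y, outputMarginal pX pYX y * reproCond pX pYX (Function.update q a t) xh y *
        log (reproCond pX pYX (Function.update q a t) xh y /
          ∑ y', outputMarginal pX pYX y' * reproCond pX pYX (Function.update q a t) xh y'))
      (∑ y, outputMarginal pX pYX y * (if xh = a.2 then posterior pX pYX a.1 y else 0) *
        log (reproCond pX pYX q xh y / reproMarginal pX q xh))
      (q a) := fun xh => by
    have h := hasDerivAt_sum_mul_mul_log_div_sum univ (outputMarginal pX pYX)
      (fun y _ => hasDerivAt_reproCond_update q a xh y (q a))
      (fun y _ => by simpa using (reproCond_pos hpX hpYX hq xh y).ne')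
      (by simpa [hmix] using (reproMarginal_pos hpX hq xh).ne')
    simpa only [Function.update_eq_self, hmix] using h
  have hrewrite : (fun t => relevanceFunctional pX pYX (Function.update q a t)) = fun t => ∑ xh,
      ∑ y, outputMarginal pX pYX y * reproCond pX pYX (Function.update q a t) xh y *
        log (reproCond pX pYX (Function.update q a t) xh y /
          ∑ y', outputMarginal pX pYX y' * reproCond pX pYX (Function.update q a t) xh y') :=
    funext fun t => by simp only [relevanceFunctional, hmix]
  rw [hrewrite]
  refine (HasDerivAt.fun_sum fun xh _ => hcol xh).congr_deriv ?_
  simp only [mul_ite, ite_mul, mul_zero, zero_mul, sum_ite_irrel, sum_const_zero, sum_ite_eq',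
    mem_univ, if_true, outputMarginal_mul_posterior (hpY _), mul_sum, mul_assoc]

end RateDistortion

theorem lagrangian_partial_derivative_general
    {𝒳 𝒳h 𝒴 : Type*} [Fintype 𝒳] [Fintype 𝒳h] [Fintype 𝒴]
    [Nonempty 𝒳]
    [DecidableEq 𝒳] [DecidableEq 𝒳h]
    (pX : 𝒳 → ℝ) (hpXpos : ∀ x, 0 < pX x)
    (pYX : 𝒳 → 𝒴 → ℝ) (hpYXpos : ∀ x y, 0 < pYX x y)
    (hpYXsum : ∀ x, ∑ y, pYX x y = 1)
    (lam β : ℝ) (hlam : lam ≠ 0)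
    (dR : 𝒳 × 𝒳h → ℝ) (r : 𝒳 → ℝ)
    (q : 𝒳 × 𝒳h → ℝ) (hqpos : ∀ x xh, 0 < q (x, xh))
    (x₀ : 𝒳) (xh₀ : 𝒳h) :
    HasDerivAt
      (fun t : ℝ =>
        lam * (∑ x, ∑ xh, pX x * Function.update q (x₀, xh₀) t (x, xh) *
            Real.log (Function.update q (x₀, xh₀) t (x, xh) /
              ∑ x', pX x' * Function.update q (x₀, xh₀) t (x', xh)))
        + (∑ x, ∑ xh, pX x * Function.update q (x₀, xh₀) t (x, xh) * dR (x, xh))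
        - β * (∑ xh, ∑ y, (∑ x, pX x * pYX x y) *
            (∑ x, Function.update q (x₀, xh₀) t (x, xh) *
              (pX x * pYX x y / ∑ x', pX x' * pYX x' y)) *
            Real.log
              ((∑ x, Function.update q (x₀, xh₀) t (x, xh) *
                (pX x * pYX x y / ∑ x', pX x' * pYX x' y)) /
               ∑ x, pX x * Function.update q (x₀, xh₀) t (x, xh)))
        + ∑ x, r x * ∑ xh, Function.update q (x₀, xh₀) t (x, xh))
      (lam * pX x₀ *
          (Real.log (q (x₀, xh₀) / ∑ x', pX x' * q (x', xh₀))
            + lam⁻¹ * dR (x₀, xh₀))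
        - β * pX x₀ * (∑ y, pYX x₀ y *
            Real.log
              ((∑ x, q (x, xh₀) * (pX x * pYX x y / ∑ x', pX x' * pYX x' y)) /
               ∑ x, pX x * q (x, xh₀)))
        + r x₀)
      (q (x₀, xh₀)) := by
  set a : 𝒳 × 𝒳h := (x₀, xh₀)
  have hrate := hasDerivAt_rateFunctional_update hpXpos hqpos a
  have hrel := hasDerivAt_relevanceFunctional_update hpXpos hpYXpos hpYXsum hqpos a
  have hdist : HasDerivAt
      (fun t => ∑ x, ∑ xh, pX x * Function.update q a t (x, xh) * dR (x, xh))
      (pX x₀ * dR a) (q a) := by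
    refine (HasDerivAt.fun_sum fun x _ => HasDerivAt.fun_sum fun xh _ =>
      ((hasDerivAt_update_apply q a (x, xh) (q a)).const_mul (pX x)).mul_const
        (dR (x, xh))).congr_deriv ?_
    simp [a, Prod.ext_iff, ite_and]
  have hmult : HasDerivAt (fun t => ∑ x, r x * ∑ xh, Function.update q a t (x, xh))
      (r x₀) (q a) := by
    refine (HasDerivAt.fun_sum fun x _ => (HasDerivAt.fun_sum fun xh _ =>
      hasDerivAt_update_apply q a (x, xh) (q a)).const_mul (r x)).congr_deriv ?_
    simp [a, Prod.ext_iff, ite_and]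
  refine ((((hrate.const_mul lam).add hdist).sub (hrel.const_mul β)).add hmult).congr_deriv ?_
  simp only [a, reproCond, reproMarginal, posterior, outputMarginal]
  field_simp

/-- Derivative of the full Lagrangian
`L(q) = λ·F(q) + Σ_{x,x̂} pX(x)·q(x,x̂)·d_R(x,x̂) − β·G(q) + Σ_x r(x)·Σ_{x̂} q(x,x̂)`
of the extended rate-distortion problem with respect to the single kernel
entry `q(x₀,x̂₀)`: the function `t ↦ L(q[(x₀,x̂₀) ↦ t])` has derivative
`λ·pX(x₀)·[log(q(x₀,x̂₀)/pq(x̂₀)) + λ⁻¹·d_R(x₀,x̂₀)]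
  − β·pX(x₀)·Σ_y pYX(y|x₀)·log(pq(x̂₀|y)/pq(x̂₀)) + r(x₀)`
at the point `t = q(x₀,x̂₀)`. -/
theorem lagrangian_partial_derivative
    {𝒳 𝒳h 𝒴 : Type*} [Fintype 𝒳] [Fintype 𝒳h] [Fintype 𝒴]
    [Nonempty 𝒳] [Nonempty 𝒳h] [Nonempty 𝒴]
    [DecidableEq 𝒳] [DecidableEq 𝒳h]
    (pX : 𝒳 → ℝ) (hpXpos : ∀ x, 0 < pX x) (hpXsum : ∑ x, pX x = 1)
    (pYX : 𝒳 → 𝒴 → ℝ) (hpYXpos : ∀ x y, 0 < pYX x y)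
    (hpYXsum : ∀ x, ∑ y, pYX x y = 1)
    (lam β : ℝ) (hlam : lam ≠ 0)
    (dR : 𝒳 × 𝒳h → ℝ) (r : 𝒳 → ℝ)
    (q : 𝒳 × 𝒳h → ℝ) (hqpos : ∀ x xh, 0 < q (x, xh))
    (x₀ : 𝒳) (xh₀ : 𝒳h) :
    HasDerivAt
      (fun t : ℝ =>
        lam * (∑ x, ∑ xh, pX x * Function.update q (x₀, xh₀) t (x, xh) *
            Real.log (Function.update q (x₀, xh₀) t (x, xh) /
              ∑ x', pX x' * Function.update q (x₀, xh₀) t (x', xh)))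
        + (∑ x, ∑ xh, pX x * Function.update q (x₀, xh₀) t (x, xh) * dR (x, xh))
        - β * (∑ xh, ∑ y, (∑ x, pX x * pYX x y) *
            (∑ x, Function.update q (x₀, xh₀) t (x, xh) *
              (pX x * pYX x y / ∑ x', pX x' * pYX x' y)) *
            Real.log
              ((∑ x, Function.update q (x₀, xh₀) t (x, xh) *
                (pX x * pYX x y / ∑ x', pX x' * pYX x' y)) /
               ∑ x, pX x * Function.update q (x₀, xh₀) t (x, xh)))
        + ∑ x, r x * ∑ xh, Function.update q (x₀, xh₀) t (x, xh))
      (lam * pX x₀ *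
          (Real.log (q (x₀, xh₀) / ∑ x', pX x' * q (x', xh₀))
            + lam⁻¹ * dR (x₀, xh₀))
        - β * pX x₀ * (∑ y, pYX x₀ y *
            Real.log
              ((∑ x, q (x, xh₀) * (pX x * pYX x y / ∑ x', pX x' * pYX x' y)) /
               ∑ x, pX x * q (x, xh₀)))
        + r x₀)
      (q (x₀, xh₀)) :=
  lagrangian_partial_derivative_general pX hpXpos pYX hpYXpos hpYXsum lam β hlam dR r q hqpos x₀ xh₀
end

section
/- (Variational upper bound on the task-relevant distortion) Under the Markov chain Y → X → X̂, for every strictly positive variational conditional probability mass function q : 𝒳̂ × 𝒴 → ℝ, written q(y|x̂), with Σ_y q(y|x̂) = 1 for every x̂, the task-relevant distortion is bounded as D_T = I(X;Y) − I(X̂;Y) ≤ I(X;Y) − H(Y) − Σ_{x̂,y} pX̂Y(x̂,y) · log q(y|x̂). -/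
/-- (Variational upper bound on the task-relevant distortion) Under the Markov
chain Y → X → X̂, for every strictly positive variational conditional pmf
`q(y|x̂)` with `Σ_y q(y|x̂) = 1`, the task-relevant distortion is bounded as
`D_T = I(X;Y) − I(X̂;Y) ≤ I(X;Y) − H(Y) − Σ_{x̂,y} pX̂Y(x̂,y)·log q(y|x̂)`. -/
theorem task_relevant_distortion_variational_upper_bound
    {𝒳 𝒳h 𝒴 : Type*} [Fintype 𝒳] [Fintype 𝒳h] [Fintype 𝒴]
    [Nonempty 𝒳] [Nonempty 𝒳h] [Nonempty 𝒴]
    (p : 𝒳 → 𝒳h → 𝒴 → ℝ)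
    (hpos : ∀ x xh y, 0 < p x xh y)
    (hsum : ∑ x, ∑ xh, ∑ y, p x xh y = 1)
    (pX : 𝒳 → ℝ) (hpX : ∀ x, pX x = ∑ xh, ∑ y, p x xh y)
    (pXh : 𝒳h → ℝ) (hpXh : ∀ xh, pXh xh = ∑ x, ∑ y, p x xh y)
    (pY : 𝒴 → ℝ) (hpY : ∀ y, pY y = ∑ x, ∑ xh, p x xh y)
    (pXY : 𝒳 → 𝒴 → ℝ) (hpXY : ∀ x y, pXY x y = ∑ xh, p x xh y)
    (pXXh : 𝒳 → 𝒳h → ℝ) (hpXXh : ∀ x xh, pXXh x xh = ∑ y, p x xh y)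
    (pXhY : 𝒳h → 𝒴 → ℝ) (hpXhY : ∀ xh y, pXhY xh y = ∑ x, p x xh y)
    (hMarkov : ∀ x xh y, p x xh y * pX x = pXY x y * pXXh x xh)
    (q : 𝒳h → 𝒴 → ℝ) (hqpos : ∀ xh y, 0 < q xh y)
    (hqsum : ∀ xh, ∑ y, q xh y = 1) :
    (∑ x, ∑ y, pXY x y * Real.log (pXY x y / (pX x * pY y)))
      - (∑ xh, ∑ y, pXhY xh y * Real.log (pXhY xh y / (pXh xh * pY y)))
      ≤ (∑ x, ∑ y, pXY x y * Real.log (pXY x y / (pX x * pY y)))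
        - (-∑ y, pY y * Real.log (pY y))
        - ∑ xh, ∑ y, pXhY xh y * Real.log (q xh y) := by
  have hpXhYpos : ∀ xh y, 0 < pXhY xh y := fun xh y => by
    rw [hpXhY]; exact Finset.sum_pos (fun x _ => hpos x xh y) Finset.univ_nonempty
  have hpXhpos : ∀ xh, 0 < pXh xh := fun xh => by
    rw [hpXh]
    exact Finset.sum_pos (fun x _ => Finset.sum_pos (fun y _ => hpos x xh y) Finset.univ_nonempty) Finset.univ_nonempty
  have hpYpos : ∀ y, 0 < pY y := fun y => by
    rw [hpY]
    exact Finset.sum_pos (fun x _ => Finset.sum_pos (fun xh _ => hpos x xh y) Finset.univ_nonempty) Finset.univ_nonempty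
  -- total mass of pXhY
  have h1 : ∑ xh, ∑ y, pXhY xh y = 1 := by
    simp_rw [hpXhY]
    calc ∑ xh, ∑ y, ∑ x, p x xh y = ∑ xh, ∑ x, ∑ y, p x xh y :=
          Finset.sum_congr rfl fun xh _ => Finset.sum_comm
      _ = ∑ x, ∑ xh, ∑ y, p x xh y := Finset.sum_comm
      _ = 1 := hsum
  have hXhmass : ∑ xh, pXh xh = 1 := by
    simp_rw [hpXh]; rw [← hsum]; exact Finset.sum_comm
  have h2 : ∑ xh, ∑ y, pXh xh * q xh y = 1 := by
    simp_rw [← Finset.mul_sum, hqsum, mul_one]; exact hXhmass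
  have hYmarg : ∀ y, ∑ xh, pXhY xh y = pY y := fun y => by
    simp_rw [hpXhY, hpY]; exact Finset.sum_comm
  -- Gibbs pointwise
  have key : ∀ xh y, pXhY xh y - pXh xh * q xh y
      ≤ pXhY xh y * Real.log (pXhY xh y / (pXh xh * q xh y)) := by
    intro xh y
    have ha := hpXhYpos xh y
    have hb : 0 < pXh xh * q xh y := mul_pos (hpXhpos xh) (hqpos xh y)
    have h := Real.log_le_sub_one_of_pos (div_pos hb ha)
    rw [Real.log_div hb.ne' ha.ne'] at h
    have h' : 1 - (pXh xh * q xh y) / pXhY xh y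
        ≤ Real.log (pXhY xh y / (pXh xh * q xh y)) := by
      rw [Real.log_div ha.ne' hb.ne']; linarith
    have := mul_le_mul_of_nonneg_left h' ha.le
    have heq : pXhY xh y * (1 - (pXh xh * q xh y) / pXhY xh y)
        = pXhY xh y - pXh xh * q xh y := by field_simp
    linarith [heq ▸ this]
  have main : 0 ≤ ∑ xh, ∑ y, pXhY xh y * Real.log (pXhY xh y / (pXh xh * q xh y)) := by
    have hle : ∑ xh, ∑ y, (pXhY xh y - pXh xh * q xh y)
        ≤ ∑ xh, ∑ y, pXhY xh y * Real.log (pXhY xh y / (pXh xh * q xh y)) :=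
      Finset.sum_le_sum fun xh _ => Finset.sum_le_sum fun y _ => key xh y
    have : ∑ xh, ∑ y, (pXhY xh y - pXh xh * q xh y) = 0 := by
      simp_rw [Finset.sum_sub_distrib]
      rw [h1, h2]; ring
    linarith
  -- rewrite main's summand
  have expand : ∀ xh y, pXhY xh y * Real.log (pXhY xh y / (pXh xh * q xh y))
      = pXhY xh y * Real.log (pXhY xh y / (pXh xh * pY y))
        + pXhY xh y * Real.log (pY y) - pXhY xh y * Real.log (q xh y) := by
    intro xh y
    have ha := (hpXhYpos xh y).ne'
    have hb := (hpXhpos xh).ne'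
    have hc := (hpYpos y).ne'
    have hd := (hqpos xh y).ne'
    rw [Real.log_div ha (mul_ne_zero hb hd), Real.log_div ha (mul_ne_zero hb hc),
      Real.log_mul hb hd, Real.log_mul hb hc]
    ring
  have hS : ∑ y, pY y * Real.log (pY y) = ∑ xh, ∑ y, pXhY xh y * Real.log (pY y) := by
    rw [Finset.sum_comm]
    exact Finset.sum_congr rfl fun y _ => by rw [← Finset.sum_mul, hYmarg]
  have final : ∑ xh, ∑ y, pXhY xh y * Real.log (pXhY xh y / (pXh xh * q xh y))
      = (∑ xh, ∑ y, pXhY xh y * Real.log (pXhY xh y / (pXh xh * pY y)))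
        + (∑ y, pY y * Real.log (pY y))
        - ∑ xh, ∑ y, pXhY xh y * Real.log (q xh y) := by
    rw [hS]
    simp_rw [expand, Finset.sum_sub_distrib, Finset.sum_add_distrib]
  linarith [final ▸ main]
end

section
/- (CLUB upper bound, discrete version with the true conditional) The contrastive log-ratio upper bound is indeed an upper bound on mutual information: Σ_{x,y} p(x,y) · log p(y|x) − Σ_x Σ_y pX(x) · pY(y) · log p(y|x) ≥ I(X;Y). -/
/-- (CLUB upper bound, discrete version with the true conditional) The contrastive
log-ratio upper bound is indeed an upper bound on mutual information:
`Σ_{x,y} p(x,y)·log p(y|x) − Σ_x Σ_y pX(x)·pY(y)·log p(y|x) ≥ I(X;Y)`,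
where `p(y|x) = p(x,y)/pX(x)`. -/
theorem club_upper_bound_mutual_info
    {𝒳 𝒴 : Type*} [Fintype 𝒳] [Fintype 𝒴] [Nonempty 𝒳] [Nonempty 𝒴]
    (p : 𝒳 → 𝒴 → ℝ)
    (hpos : ∀ x y, 0 < p x y)
    (hsum : ∑ x, ∑ y, p x y = 1)
    (pX : 𝒳 → ℝ) (hpX : ∀ x, pX x = ∑ y, p x y)
    (pY : 𝒴 → ℝ) (hpY : ∀ y, pY y = ∑ x, p x y) :
    (∑ x, ∑ y, p x y * Real.log (p x y / (pX x * pY y)))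
      ≤ (∑ x, ∑ y, p x y * Real.log (p x y / pX x))
        - ∑ x, ∑ y, pX x * pY y * Real.log (p x y / pX x) := by
  have hX0 : ∀ x, 0 < pX x := fun x => by
    rw [hpX]; exact Finset.sum_pos (fun y _ => hpos x y) Finset.univ_nonempty
  have hY0 : ∀ y, 0 < pY y := fun y => by
    rw [hpY]; exact Finset.sum_pos (fun x _ => hpos x y) Finset.univ_nonempty
  have hXsum : ∑ x, pX x = 1 := by simpa [hpX] using hsum
  -- key: for each y, ∑ x, pX x * log (p x y / (pX x * pY y)) ≤ 0
  have key : ∀ y, ∑ x, pX x * Real.log (p x y / (pX x * pY y)) ≤ 0 := by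
    intro y
    have h1 : ∑ x, pX x * Real.log (p x y / (pX x * pY y))
        ≤ ∑ x, pX x * (p x y / (pX x * pY y) - 1) :=
      Finset.sum_le_sum fun x _ =>
        mul_le_mul_of_nonneg_left
          (Real.log_le_sub_one_of_pos (div_pos (hpos x y) (mul_pos (hX0 x) (hY0 y)))) (hX0 x).le
    have h2 : ∑ x, pX x * (p x y / (pX x * pY y) - 1)
        = (∑ x, p x y) / pY y - ∑ x, pX x := by
      rw [Finset.sum_div, ← Finset.sum_sub_distrib]
      refine Finset.sum_congr rfl fun x _ => ?_
      have hx := (hX0 x).ne'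
      have hy := (hY0 y).ne'
      field_simp
    have h3 : (∑ x, p x y) / pY y - ∑ x, pX x = 0 := by
      rw [← hpY, div_self (hY0 y).ne', hXsum]; ring
    linarith
  -- key2: ∑ x, pX x * pY y * log (p x y / pX x) ≤ pY y * log (pY y)
  have key2 : ∀ y, ∑ x, pX x * pY y * Real.log (p x y / pX x)
      ≤ pY y * Real.log (pY y) := by
    intro y
    have hsplit : ∀ x, Real.log (p x y / pX x)
        = Real.log (p x y / (pX x * pY y)) + Real.log (pY y) := by
      intro x
      rw [div_mul_eq_div_div, Real.log_div (div_pos (hpos x y) (hX0 x)).ne' (hY0 y).ne']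
      ring
    have : ∑ x, pX x * pY y * Real.log (p x y / pX x)
        = pY y * (∑ x, pX x * Real.log (p x y / (pX x * pY y))) + pY y * Real.log (pY y) := by
      simp only [hsplit, mul_add]
      rw [Finset.sum_add_distrib]
      congr 1
      · rw [Finset.mul_sum]
        exact Finset.sum_congr rfl fun x _ => by ring
      · simp_rw [mul_assoc]
        rw [← Finset.sum_mul, hXsum, one_mul]
    rw [this]
    nlinarith [key y, hY0 y]
  -- rewrite LHS
  have hlhs : (∑ x, ∑ y, p x y * Real.log (p x y / (pX x * pY y)))
      = (∑ x, ∑ y, p x y * Real.log (p x y / pX x))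
        - ∑ x, ∑ y, p x y * Real.log (pY y) := by
    rw [← Finset.sum_sub_distrib]
    refine Finset.sum_congr rfl fun x _ => ?_
    rw [← Finset.sum_sub_distrib]
    refine Finset.sum_congr rfl fun y _ => ?_
    rw [div_mul_eq_div_div, Real.log_div (div_pos (hpos x y) (hX0 x)).ne' (hY0 y).ne']
    ring
  rw [hlhs]
  have hmain : ∑ x, ∑ y, pX x * pY y * Real.log (p x y / pX x)
      ≤ ∑ x, ∑ y, p x y * Real.log (pY y) := by
    rw [Finset.sum_comm, Finset.sum_comm (f := fun x y => p x y * Real.log (pY y))]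
    refine Finset.sum_le_sum fun y _ => ?_
    have : ∑ x, p x y * Real.log (pY y) = pY y * Real.log (pY y) := by
      rw [← Finset.sum_mul, ← hpY]
    rw [this]
    exact key2 y
  linarith
end

section
/- (Donsker–Varadhan / MINE lower bound, discrete version) For every function T : 𝒳 × 𝒴 → ℝ, the mutual information satisfies I(X;Y) ≥ Σ_{x,y} p(x,y) · T(x,y) − log( Σ_{x,y} pX(x) · pY(y) · exp(T(x,y)) ). -/
/-- (Donsker–Varadhan / MINE lower bound, discrete version) For every function
`T : 𝒳 × 𝒴 → ℝ`, the mutual information satisfies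
`I(X;Y) ≥ Σ_{x,y} p(x,y)·T(x,y) − log(Σ_{x,y} pX(x)·pY(y)·exp(T(x,y)))`. -/
theorem donsker_varadhan_mine_lower_bound
    {𝒳 𝒴 : Type*} [Fintype 𝒳] [Fintype 𝒴] [Nonempty 𝒳] [Nonempty 𝒴]
    (p : 𝒳 → 𝒴 → ℝ)
    (hpos : ∀ x y, 0 < p x y)
    (hsum : ∑ x, ∑ y, p x y = 1)
    (pX : 𝒳 → ℝ) (hpX : ∀ x, pX x = ∑ y, p x y)
    (pY : 𝒴 → ℝ) (hpY : ∀ y, pY y = ∑ x, p x y)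
    (T : 𝒳 × 𝒴 → ℝ) :
    (∑ x, ∑ y, p x y * T (x, y))
      - Real.log (∑ x, ∑ y, pX x * pY y * Real.exp (T (x, y)))
      ≤ ∑ x, ∑ y, p x y * Real.log (p x y / (pX x * pY y)) := by
  have hpXpos : ∀ x, 0 < pX x := fun x => by
    rw [hpX]; exact Finset.sum_pos (fun y _ => hpos x y) Finset.univ_nonempty
  have hpYpos : ∀ y, 0 < pY y := fun y => by
    rw [hpY]; exact Finset.sum_pos (fun x _ => hpos x y) Finset.univ_nonempty
  set Z := ∑ x, ∑ y, pX x * pY y * Real.exp (T (x, y)) with hZdef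
  have hZpos : 0 < Z := Finset.sum_pos
    (fun x _ => Finset.sum_pos (fun y _ => by
      have := hpXpos x; have := hpYpos y; positivity) Finset.univ_nonempty)
    Finset.univ_nonempty
  have key : ∀ x y, p x y * T (x, y) - p x y * Real.log (p x y / (pX x * pY y))
      - p x y * Real.log Z ≤ pX x * pY y * Real.exp (T (x, y)) / Z - p x y := by
    intro x y
    have hp := hpos x y
    have hx := hpXpos x
    have hy := hpYpos y
    have hq : 0 < pX x * pY y * Real.exp (T (x, y)) / Z := by positivity
    have hlog := Real.log_le_sub_one_of_pos
      (show 0 < (pX x * pY y * Real.exp (T (x, y)) / Z) / p x y by positivity)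
    have heq : Real.log ((pX x * pY y * Real.exp (T (x, y)) / Z) / p x y)
        = T (x, y) - Real.log (p x y / (pX x * pY y)) - Real.log Z := by
      rw [Real.log_div hq.ne' hp.ne', Real.log_div hp.ne' (by positivity),
        Real.log_div (by positivity) hZpos.ne',
        Real.log_mul (by positivity) (Real.exp_ne_zero _), Real.log_exp]
      ring
    have h2 := mul_le_mul_of_nonneg_left hlog hp.le
    rw [heq] at h2
    calc p x y * T (x, y) - p x y * Real.log (p x y / (pX x * pY y)) - p x y * Real.log Z
        = p x y * (T (x, y) - Real.log (p x y / (pX x * pY y)) - Real.log Z) := by ring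
      _ ≤ p x y * ((pX x * pY y * Real.exp (T (x, y)) / Z) / p x y - 1) := h2
      _ = pX x * pY y * Real.exp (T (x, y)) / Z - p x y := by
          field_simp
  have hsumkey : ∑ x, ∑ y, (p x y * T (x, y) - p x y * Real.log (p x y / (pX x * pY y))
      - p x y * Real.log Z)
      ≤ ∑ x, ∑ y, (pX x * pY y * Real.exp (T (x, y)) / Z - p x y) :=
    Finset.sum_le_sum fun x _ => Finset.sum_le_sum fun y _ => key x y
  have hrhs : ∑ x, ∑ y, (pX x * pY y * Real.exp (T (x, y)) / Z - p x y) = 0 := by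
    have h1 : ∑ x, ∑ y, pX x * pY y * Real.exp (T (x, y)) / Z = 1 := by
      simp only [← Finset.sum_div, ← hZdef]
      exact div_self hZpos.ne'
    simp only [Finset.sum_sub_distrib]
    rw [h1, hsum]; ring
  have hlhs : ∑ x, ∑ y, (p x y * T (x, y) - p x y * Real.log (p x y / (pX x * pY y))
      - p x y * Real.log Z)
      = (∑ x, ∑ y, p x y * T (x, y))
        - (∑ x, ∑ y, p x y * Real.log (p x y / (pX x * pY y))) - Real.log Z := by
    simp only [Finset.sum_sub_distrib, ← Finset.sum_mul]
    rw [hsum]; ring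
  rw [hlhs, hrhs] at hsumkey
  linarith
end
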